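/- Let k be an algebraically closed field, S := k[y₁,…,yₙ], and M a nonzero S-module that is finite-dimensional over k. Then the set of maximal ideals m ⊆ S with M/mM ≠ 0 (the support of M) consists of exactly one element if and only if for every i the k-linear endomorphism of M given by multiplication by yᵢ has exactly one eigenvalue. -/

import Mathlib

/-!
By the Nullstellensatz the maximal ideals of `k[y₁,…,yₙ]` are the ideals `m_a` of points
`a ∈ kⁿ`, so the support of `M` is a set `V` of points, nonempty because `M ≠ 0`. A scalar
`c` is an eigenvalue of `yᵢ` iff `yᵢ - c` is not invertible on the finite-dimensional space
`M`, iff it lies in some `m_a` with `a ∈ V` (Nakayama), i.e. iff `c = aᵢ` for some `a ∈ V`.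
Hence the eigenvalues of `yᵢ` form the `i`-th coordinate projection of `V`, and a nonempty set
of points is a singleton iff all its coordinate projections are.
-/

open MvPolynomial

theorem Set.exists_eq_singleton_iff_forall_image_eval {ι : Type*} {α : ι → Type*}
    {V : Set (∀ i, α i)} (hV : V.Nonempty) :
    (∃ a, V = {a}) ↔ ∀ i, ∃ c, Function.eval i '' V = {c} := by
  refine ⟨fun ⟨a, ha⟩ i => ⟨a i, by rw [ha, Set.image_singleton]⟩, fun h => ?_⟩
  choose c hc using h
  refine ⟨c, hV.subset_singleton_iff.mp fun a ha => funext fun i => ?_⟩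
  exact (hc i).subset (Set.mem_image_of_mem _ ha)

theorem Function.Injective.exists_image_eq_singleton_iff {α β : Type*} {f : α → β}
    (hf : f.Injective) {V : Set α} : (∃ b, f '' V = {b}) ↔ ∃ a, V = {a} := by
  simp only [Set.exists_eq_singleton_iff_nonempty_subsingleton, Set.image_nonempty,
    hf.subsingleton_image_iff]

section Nakayama

variable {R M : Type*} [CommRing R] [AddCommGroup M] [Module R M] [Module.Finite R M]

theorem Submodule.ideal_smul_top_ne_top_of_annihilator_le {I : Ideal R} (hI : I ≠ ⊤)
    (h : Module.annihilator R M ≤ I) : I • (⊤ : Submodule R M) ≠ ⊤ := by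
  intro htop
  obtain ⟨r, hr1, hr⟩ :=
    exists_sub_one_mem_and_smul_eq_zero_of_fg_of_le_smul I ⊤ Module.Finite.fg_top htop.ge
  have hrI : r ∈ I := h (Module.mem_annihilator.mpr fun x => hr x trivial)
  exact hI ((Ideal.eq_top_iff_one I).mpr (by simpa using I.sub_mem hrI hr1))

theorem exists_isMaximal_smul_top_ne_top_of_smul_eq_zero {t : R} {x : M} (hx : x ≠ 0)
    (ht : t • x = 0) :
    ∃ m : Ideal R, m.IsMaximal ∧ m • (⊤ : Submodule R M) ≠ ⊤ ∧ t ∈ m := by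
  have hJ : (R ∙ x).annihilator ≠ ⊤ := by
    simpa [Submodule.annihilator_eq_top_iff] using hx
  obtain ⟨m, hm, hJm⟩ := Ideal.exists_le_maximal _ hJ
  have hann : Module.annihilator R M ≤ m := by
    rw [← Submodule.annihilator_top]
    exact (Submodule.annihilator_mono le_top).trans hJm
  exact ⟨m, hm, Submodule.ideal_smul_top_ne_top_of_annihilator_le hm.ne_top hann,
    hJm (Submodule.mem_annihilator_span_singleton x t |>.mpr ht)⟩

end Nakayama

theorem Module.End.hasEigenvalue_restrictScalars_lsmul_iff {k S M : Type*} [Field k]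
    [CommRing S] [Algebra k S] [AddCommGroup M] [Module S M] [Module k M]
    [IsScalarTower k S M] [FiniteDimensional k M] (s : S) (c : k) :
    Module.End.HasEigenvalue ((LinearMap.lsmul S M s).restrictScalars k) c ↔
      ∃ m : Ideal S, m.IsMaximal ∧ m • (⊤ : Submodule S M) ≠ ⊤ ∧
        s - algebraMap k S c ∈ m := by
  have : Module.Finite S M := .of_restrictScalars_finite k S M
  have hsub : (LinearMap.lsmul S M s).restrictScalars k - c • 1 =
      (LinearMap.lsmul S M (s - algebraMap k S c)).restrictScalars k := by
    ext x
    simp [algebraMap_smul]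
  rw [hasEigenvalue_iff, eigenspace_def, hsub]
  constructor
  · intro hker
    obtain ⟨x, hx, hx0⟩ := Submodule.exists_mem_ne_zero_of_ne_bot hker
    exact exists_isMaximal_smul_top_ne_top_of_smul_eq_zero hx0 hx
  · rintro ⟨m, -, hm, ht⟩ hker
    have hsurj := LinearMap.injective_iff_surjective.mp (LinearMap.ker_eq_bot.mp hker)
    refine hm (eq_top_iff.mpr fun x _ => ?_)
    obtain ⟨y, rfl⟩ := hsurj x
    exact Submodule.smul_mem_smul ht trivial

namespace MvPolynomial

variable {σ k : Type*} [Field k]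

theorem X_sub_C_mem_vanishingIdeal_singleton_iff {a : σ → k} {i : σ} {c : k} :
    X i - C c ∈ (vanishingIdeal k {a} : Ideal (MvPolynomial σ k)) ↔ a i = c := by
  simp [sub_eq_zero]

theorem vanishingIdeal_singleton_injective :
    (fun a : σ → k => (vanishingIdeal k {a} : Ideal (MvPolynomial σ k))).Injective := by
  intro a b hab
  funext i
  have h : X i - C (a i) ∈ (vanishingIdeal k {a} : Ideal (MvPolynomial σ k)) :=
    X_sub_C_mem_vanishingIdeal_singleton_iff.mpr rfl
  rwa [show (vanishingIdeal k {a} : Ideal (MvPolynomial σ k)) = vanishingIdeal k {b} from hab,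
    X_sub_C_mem_vanishingIdeal_singleton_iff, eq_comm] at h

variable (σ k) (M : Type*) [AddCommGroup M] [Module (MvPolynomial σ k) M]

def pointSupport : Set (σ → k) :=
  {a | (vanishingIdeal k {a} : Ideal (MvPolynomial σ k)) •
    (⊤ : Submodule (MvPolynomial σ k) M) ≠ ⊤}

variable {k M} [IsAlgClosed k] [Finite σ]

theorem setOf_isMaximal_smul_top_ne_top_eq_image :
    {m : Ideal (MvPolynomial σ k) |
        m.IsMaximal ∧ m • (⊤ : Submodule (MvPolynomial σ k) M) ≠ ⊤} =
      (fun a => vanishingIdeal k {a}) '' pointSupport σ k M := by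
  ext m
  constructor
  · rintro ⟨hm, hM⟩
    obtain ⟨a, rfl⟩ := isMaximal_iff_eq_vanishingIdeal_singleton.mp hm
    exact ⟨a, hM, rfl⟩
  · rintro ⟨a, ha, rfl⟩
    exact ⟨inferInstance, ha⟩

theorem pointSupport_nonempty [Module.Finite (MvPolynomial σ k) M] [Nontrivial M] :
    (pointSupport σ k M).Nonempty := by
  obtain ⟨x, hx⟩ := exists_ne (0 : M)
  obtain ⟨m, hm, hM, -⟩ :=
    exists_isMaximal_smul_top_ne_top_of_smul_eq_zero hx (zero_smul (MvPolynomial σ k) x)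
  obtain ⟨a, rfl⟩ := isMaximal_iff_eq_vanishingIdeal_singleton.mp hm
  exact ⟨a, hM⟩

theorem setOf_hasEigenvalue_X_eq_image [Module k M] [IsScalarTower k (MvPolynomial σ k) M]
    [FiniteDimensional k M] (i : σ) :
    {c : k | Module.End.HasEigenvalue
        ((LinearMap.lsmul (MvPolynomial σ k) M (X i)).restrictScalars k) c} =
      Function.eval i '' pointSupport σ k M := by
  ext c
  simp only [Set.mem_ofPred_eq, Module.End.hasEigenvalue_restrictScalars_lsmul_iff,
    algebraMap_eq, Set.mem_image, Function.eval]
  constructor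
  · rintro ⟨m, hm, hM, hc⟩
    obtain ⟨a, rfl⟩ := isMaximal_iff_eq_vanishingIdeal_singleton.mp hm
    exact ⟨a, hM, X_sub_C_mem_vanishingIdeal_singleton_iff.mp hc⟩
  · rintro ⟨a, ha, rfl⟩
    exact ⟨_, inferInstance, ha, X_sub_C_mem_vanishingIdeal_singleton_iff.mpr rfl⟩

end MvPolynomial

theorem support_singleton_iff_unique_eigenvalues (k : Type*) [Field k] [IsAlgClosed k]
    (n : ℕ) (M : Type*) [AddCommGroup M] [Module (MvPolynomial (Fin n) k) M]
    [Module k M] [IsScalarTower k (MvPolynomial (Fin n) k) M]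
    [FiniteDimensional k M] [Nontrivial M] :
    (∃ m₀ : Ideal (MvPolynomial (Fin n) k),
        {m : Ideal (MvPolynomial (Fin n) k) |
          m.IsMaximal ∧ m • (⊤ : Submodule (MvPolynomial (Fin n) k) M) ≠ ⊤} = {m₀}) ↔
      ∀ i : Fin n, ∃ c₀ : k,
        {c : k | Module.End.HasEigenvalue
          (((LinearMap.lsmul (MvPolynomial (Fin n) k) M (X i))).restrictScalars k) c} =
          {c₀} := by
  have : Module.Finite (MvPolynomial (Fin n) k) M := .of_restrictScalars_finite k _ M
  simp only [setOf_isMaximal_smul_top_ne_top_eq_image, setOf_hasEigenvalue_X_eq_image]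
  rw [vanishingIdeal_singleton_injective.exists_image_eq_singleton_iff,
    Set.exists_eq_singleton_iff_forall_image_eval (pointSupport_nonempty (σ := Fin n))]
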